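/- Let α, β, c be real parameters. For every function f : ℝ → ℝ and every x ≠ 0, the Casimir operator Q = Z² + Y² takes the constant value 4(c²+1), i.e. Z(Zf)(x) + Y(Yf)(x) = 4(c²+1) f(x). -/

import Mathlib

noncomputable section

/-- The operator `Y`: multiplication by `2x`. -/
noncomputable def Yop (f : ℝ → ℝ) (x : ℝ) : ℝ := 2 * x * f x

/-- The operator `Z`: `(Z f)(x) = -(2/x)(c f(x) + (x-1)(x+c) f(-x))`. -/
noncomputable def Zop (c : ℝ) (f : ℝ → ℝ) (x : ℝ) : ℝ :=
  -(2 / x) * (c * f x + (x - 1) * (x + c) * f (-x))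

theorem Yop_Yop (f : ℝ → ℝ) (x : ℝ) : Yop (Yop f) x = 4 * x ^ 2 * f x := by
  simp only [Yop]
  ring

/-- In `Z²f(x)` the two `f(-x)` terms `∓ (4c/x²)(x-1)(x+c) f(-x)` cancel, and the `f(x)` coefficient
`-(4/x²)((x²-1)(x²-c²) - c²)` simplifies to `4(c² + 1 - x²)`. -/
theorem Zop_Zop (c : ℝ) (f : ℝ → ℝ) {x : ℝ} (hx : x ≠ 0) :
    Zop c (Zop c f) x = 4 * (c ^ 2 + 1 - x ^ 2) * f x := by
  simp only [Zop, neg_neg]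
  field_simp
  ring

theorem casimir_value_general (c : ℝ) (f : ℝ → ℝ) (x : ℝ) (hx : x ≠ 0) :
    Zop c (Zop c f) x + Yop (Yop f) x = 4 * (c ^ 2 + 1) * f x := by
  rw [Zop_Zop c f hx, Yop_Yop]
  ring

/-- The Casimir operator `Q = Z² + Y²` takes the constant value `4(c² + 1)`. -/
theorem casimir_value (α β c : ℝ) (f : ℝ → ℝ) (x : ℝ) (hx : x ≠ 0) :
    Zop c (Zop c f) x + Yop (Yop f) x = 4 * (c ^ 2 + 1) * f x :=
  casimir_value_general c f x hx
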